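/- arXiv:2004.14291 — 7 statements merged into one kernel-verified Lean document; each statement's English description precedes it below -/
import Mathlib

section
/- Solutions of the model with positive initial data remain positive: if C, L, T : [t₀, t₁] → ℝ are differentiable and satisfy C' = ρ_C(T+L+C)C − C/τ_C − αC², L' = ρ_L L − αLC, T' = −αTC on [t₀, t₁], with C(t₀) > 0, L(t₀) > 0, T(t₀) > 0, then C(t) > 0, L(t) > 0 and T(t) > 0 for all t ∈ [t₀, t₁]. -/
/-!
Each equation of the model is linear in its own unknown: `f' = g f` with a coefficient `g`
that is continuous on `[t₀, t₁]` (it involves only `C`, `L`, `T`), hence bounded, so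
`x ↦ g t * x` is uniformly Lipschitz. If `f` vanished somewhere, uniqueness of solutions
backwards in time would make `f` coincide with the zero solution down to `t₀`, contradicting
`f t₀ > 0`; by the intermediate value theorem, `f` therefore stays positive.
-/

open Set

theorem eqOn_zero_of_hasDerivAt_mul_of_eq_zero_right {a b : ℝ} {f g : ℝ → ℝ}
    (hg : ContinuousOn g (Icc a b)) (hf : ∀ t ∈ Icc a b, HasDerivAt f (g t * f t) t)
    (hb : f b = 0) : EqOn f (fun _ => 0) (Icc a b) := by
  obtain ⟨M, hM⟩ := isCompact_Icc.exists_bound_of_continuousOn hg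
  set K : NNReal := ⟨max M 0, le_max_right M 0⟩
  have hgK : ∀ t ∈ Icc a b, ‖g t‖₊ ≤ K := fun t ht =>
    NNReal.coe_le_coe.mp <| (hM t ht).trans (le_max_left M 0)
  have hlip : ∀ t ∈ Ioc a b, LipschitzOnWith K (fun x : ℝ => g t * x) univ := fun t ht =>
    ((lipschitzWith_smul (g t)).weaken (hgK t (Ioc_subset_Icc_self ht))).lipschitzOnWith
  exact ODE_solution_unique_of_mem_Icc_left hlip (HasDerivAt.continuousOn hf)
    (fun t ht => (hf t (Ioc_subset_Icc_self ht)).hasDerivWithinAt) (fun _ _ => mem_univ _)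
    continuousOn_const (fun t _ => by simpa using hasDerivWithinAt_const t (Iic t) (0 : ℝ))
    (fun _ _ => mem_univ _) hb

theorem pos_of_hasDerivAt_mul {a b : ℝ} {f g : ℝ → ℝ}
    (hg : ContinuousOn g (Icc a b)) (hf : ∀ t ∈ Icc a b, HasDerivAt f (g t * f t) t)
    (ha : 0 < f a) : ∀ t ∈ Icc a b, 0 < f t := by
  intro t ht
  by_contra! hft
  have hsub : Icc a t ⊆ Icc a b := Icc_subset_Icc_right ht.2
  obtain ⟨s, hs, hfs⟩ := intermediate_value_Icc' ht.1
    (HasDerivAt.continuousOn fun x hx => hf x (hsub hx)) ⟨hft, ha.le⟩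
  have hsub' : Icc a s ⊆ Icc a b := (Icc_subset_Icc_right hs.2).trans hsub
  have hfa := eqOn_zero_of_hasDerivAt_mul_of_eq_zero_right (hg.mono hsub')
    (fun x hx => hf x (hsub' hx)) hfs (left_mem_Icc.mpr hs.1)
  exact ha.ne' hfa

theorem carT_model_positivity_general
    (ρC ρL α τC : ℝ)
    (t₀ t₁ : ℝ) (C L T : ℝ → ℝ)
    (hC : ∀ t ∈ Set.Icc t₀ t₁,
      HasDerivAt C (ρC * (T t + L t + C t) * C t - C t / τC - α * (C t) ^ 2) t)
    (hL : ∀ t ∈ Set.Icc t₀ t₁, HasDerivAt L (ρL * L t - α * L t * C t) t)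
    (hT : ∀ t ∈ Set.Icc t₀ t₁, HasDerivAt T (-(α * T t * C t)) t)
    (hC0 : 0 < C t₀) (hL0 : 0 < L t₀) (hT0 : 0 < T t₀) :
    ∀ t ∈ Set.Icc t₀ t₁, 0 < C t ∧ 0 < L t ∧ 0 < T t := by
  have hCc := HasDerivAt.continuousOn hC
  have hLc := HasDerivAt.continuousOn hL
  have hTc := HasDerivAt.continuousOn hT
  have hCpos := pos_of_hasDerivAt_mul (g := fun t => ρC * (T t + L t + C t) - τC⁻¹ - α * C t)
    (by fun_prop) (fun t ht => (hC t ht).congr_deriv (by ring)) hC0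
  have hLpos := pos_of_hasDerivAt_mul (g := fun t => ρL - α * C t)
    (by fun_prop) (fun t ht => (hL t ht).congr_deriv (by ring)) hL0
  have hTpos := pos_of_hasDerivAt_mul (g := fun t => -(α * C t))
    (by fun_prop) (fun t ht => (hT t ht).congr_deriv (by ring)) hT0
  exact fun t ht => ⟨hCpos t ht, hLpos t ht, hTpos t ht⟩

/-- Solutions of the CAR-T/leukemia/normal T-cell model with
positive initial data remain positive on `[t₀, t₁]`. -/
theorem carT_model_positivity
    (ρC ρL α τC : ℝ) (hρC : 0 < ρC) (hρL : 0 < ρL) (hα : 0 < α) (hτC : 0 < τC)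
    (t₀ t₁ : ℝ) (C L T : ℝ → ℝ)
    (hC : ∀ t ∈ Set.Icc t₀ t₁,
      HasDerivAt C (ρC * (T t + L t + C t) * C t - C t / τC - α * (C t) ^ 2) t)
    (hL : ∀ t ∈ Set.Icc t₀ t₁, HasDerivAt L (ρL * L t - α * L t * C t) t)
    (hT : ∀ t ∈ Set.Icc t₀ t₁, HasDerivAt T (-(α * T t * C t)) t)
    (hC0 : 0 < C t₀) (hL0 : 0 < L t₀) (hT0 : 0 < T t₀) :
    ∀ t ∈ Set.Icc t₀ t₁, 0 < C t ∧ 0 < L t ∧ 0 < T t :=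
  carT_model_positivity_general ρC ρL α τC t₀ t₁ C L T hC hL hT hC0 hL0 hT0
end

section
/- Under the instability hypotheses, the CAR-T population never falls below its initial value: if C, L, T : [t₀, ∞) → ℝ are differentiable, satisfy the system C' = ρ_C(T+L+C)C − C/τ_C − αC², L' = ρ_L L − αLC, T' = −αTC, have C(t₀) > 0, L(t₀) > 0, T(t₀) > 0, and if ρ_C > α and (ρ_C − α)·τ_C·(C(t₀)+L(t₀)+T(t₀)) > 1, then C(t) ≥ C(t₀) for all t ≥ t₀. -/
/-!
Write `S = T + L + C` and `W = (ρ_C − α) S − 1/τ_C`. Then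
`C' = C W + α C (T + L)` and `W' = (ρ_C − α)(C W + ρ_L L) ≥ (ρ_C − α) C W`.
Each of `C, L, T` solves a linear equation `X' = g X`, and `W` a linear differential
inequality `W' ≥ g W`; such an `X` keeps the sign of `X(t₀)`, as `X · exp (-∫ g)` is
nondecreasing. The instability hypothesis says `W(t₀) > 0`, so `C, L, T, W > 0` for all
`t ≥ t₀`, whence `C' > 0`.
-/

open Set

theorem ContinuousOn.exists_hasDerivAt_Ici {g : ℝ → ℝ} {a : ℝ}
    (hg : ContinuousOn g (Ici a)) : ∃ G : ℝ → ℝ, ∀ t ∈ Ici a, HasDerivAt G (g t) t := by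
  have hcont : Continuous fun s => g (max s a) :=
    hg.comp_continuous (continuous_id.max continuous_const) fun s => le_max_right s a
  refine ⟨fun t => ∫ s in a..t, g (max s a), fun t ht => ?_⟩
  simpa [max_eq_left (mem_Ici.mp ht)] using (hcont.integral_hasStrictDerivAt a t).hasDerivAt

theorem monotoneOn_Ici_of_hasDerivAt_nonneg {f f' : ℝ → ℝ} {a : ℝ}
    (hf : ∀ t ∈ Ici a, HasDerivAt f (f' t) t) (hf' : ∀ t ∈ Ici a, 0 ≤ f' t) :
    MonotoneOn f (Ici a) := by
  refine monotoneOn_of_hasDerivWithinAt_nonneg (f' := f') (convex_Ici a)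
    (fun t ht => (hf t ht).continuousAt.continuousWithinAt) (fun t ht => ?_) (fun t ht => ?_)
  all_goals rw [interior_Ici] at ht
  · exact (hf t (Ioi_subset_Ici_self ht)).hasDerivWithinAt
  · exact hf' t (Ioi_subset_Ici_self ht)

theorem pos_of_mul_le_hasDerivAt {X X' g : ℝ → ℝ} {a : ℝ} (hg : ContinuousOn g (Ici a))
    (hX : ∀ t ∈ Ici a, HasDerivAt X (X' t) t) (hgX : ∀ t ∈ Ici a, g t * X t ≤ X' t)
    (ha : 0 < X a) : ∀ t ∈ Ici a, 0 < X t := by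
  obtain ⟨G, hG⟩ := hg.exists_hasDerivAt_Ici
  have hmono : MonotoneOn (fun t => X t * Real.exp (-G t)) (Ici a) := by
    refine monotoneOn_Ici_of_hasDerivAt_nonneg
      (f' := fun t => (X' t - g t * X t) * Real.exp (-G t))
      (fun t ht => ((hX t ht).mul (hG t ht).fun_neg.exp).congr_deriv (by ring))
      (fun t ht => mul_nonneg (sub_nonneg.mpr (hgX t ht)) (Real.exp_pos _).le)
  intro t ht
  have hle : X a * Real.exp (-G a) ≤ X t * Real.exp (-G t) := hmono self_mem_Ici ht ht
  exact pos_of_mul_pos_left ((mul_pos ha (Real.exp_pos _)).trans_le hle) (Real.exp_pos _).le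

theorem pos_of_hasDerivAt_eq_mul {X g : ℝ → ℝ} {a : ℝ} (hg : ContinuousOn g (Ici a))
    (hX : ∀ t ∈ Ici a, HasDerivAt X (g t * X t) t) (ha : 0 < X a) : ∀ t ∈ Ici a, 0 < X t :=
  pos_of_mul_le_hasDerivAt hg hX (fun _ _ => le_rfl) ha

theorem carT_never_below_initial_general
    (ρC ρL α τC : ℝ) (hρL : 0 < ρL) (hα : 0 < α) (hτC : 0 < τC)
    (t₀ : ℝ) (C L T : ℝ → ℝ)
    (hC : ∀ t ∈ Set.Ici t₀,
      HasDerivAt C (ρC * (T t + L t + C t) * C t - C t / τC - α * (C t) ^ 2) t)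
    (hL : ∀ t ∈ Set.Ici t₀, HasDerivAt L (ρL * L t - α * L t * C t) t)
    (hT : ∀ t ∈ Set.Ici t₀, HasDerivAt T (-(α * T t * C t)) t)
    (hC0 : 0 < C t₀) (hL0 : 0 < L t₀) (hT0 : 0 < T t₀)
    (hunstable1 : ρC > α)
    (hunstable2 : (ρC - α) * τC * (C t₀ + L t₀ + T t₀) > 1) :
    ∀ t ∈ Set.Ici t₀, C t₀ ≤ C t := by
  have hCc : ContinuousOn C (Ici t₀) := fun t ht => (hC t ht).continuousAt.continuousWithinAt
  have hLc : ContinuousOn L (Ici t₀) := fun t ht => (hL t ht).continuousAt.continuousWithinAt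
  have hTc : ContinuousOn T (Ici t₀) := fun t ht => (hT t ht).continuousAt.continuousWithinAt
  have hCpos := pos_of_hasDerivAt_eq_mul
    (g := fun t => ρC * (T t + L t + C t) - 1 / τC - α * C t) (by fun_prop)
    (fun t ht => (hC t ht).congr_deriv (by ring)) hC0
  have hLpos := pos_of_hasDerivAt_eq_mul (g := fun t => ρL - α * C t)
    (by fun_prop) (fun t ht => (hL t ht).congr_deriv (by ring)) hL0
  have hTpos := pos_of_hasDerivAt_eq_mul (g := fun t => -(α * C t))
    (by fun_prop) (fun t ht => (hT t ht).congr_deriv (by ring)) hT0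
  set W : ℝ → ℝ := fun t => (ρC - α) * (T t + L t + C t) - 1 / τC with hW
  have hWpos : ∀ t ∈ Ici t₀, 0 < W t := by
    refine pos_of_mul_le_hasDerivAt (g := fun t => (ρC - α) * C t) (by fun_prop)
      (X' := fun t => (ρC - α) * (C t * W t + ρL * L t))
      (fun t ht => (((((hT t ht).add (hL t ht)).add (hC t ht)).const_mul (ρC - α)).sub_const
        (1 / τC)).congr_deriv (by rw [hW]; ring))
      (fun t ht => ?_) ?_
    · rw [mul_assoc]
      exact mul_le_mul_of_nonneg_left (le_add_of_nonneg_right (mul_pos hρL (hLpos t ht)).le)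
        (sub_pos.mpr hunstable1).le
    · exact sub_pos.mpr <| (div_lt_iff₀ hτC).mpr (by linarith)
  have hCmono : MonotoneOn C (Ici t₀) := by
    refine monotoneOn_Ici_of_hasDerivAt_nonneg hC fun t ht => ?_
    have hC' : ρC * (T t + L t + C t) * C t - C t / τC - α * C t ^ 2
        = C t * W t + α * C t * (T t + L t) := by rw [hW]; ring
    rw [hC']
    have := hCpos t ht; have := hLpos t ht; have := hTpos t ht; have := hWpos t ht
    positivity
  exact fun t ht => hCmono self_mem_Ici ht ht

/-- Under the instability hypotheses `ρ_C > α` and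
`(ρ_C − α)·τ_C·S(t₀) > 1`, the CAR-T population never falls below its initial
value: `C(t) ≥ C(t₀)` for all `t ≥ t₀`. -/
theorem carT_never_below_initial
    (ρC ρL α τC : ℝ) (hρC : 0 < ρC) (hρL : 0 < ρL) (hα : 0 < α) (hτC : 0 < τC)
    (t₀ : ℝ) (C L T : ℝ → ℝ)
    (hC : ∀ t ∈ Set.Ici t₀,
      HasDerivAt C (ρC * (T t + L t + C t) * C t - C t / τC - α * (C t) ^ 2) t)
    (hL : ∀ t ∈ Set.Ici t₀, HasDerivAt L (ρL * L t - α * L t * C t) t)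
    (hT : ∀ t ∈ Set.Ici t₀, HasDerivAt T (-(α * T t * C t)) t)
    (hC0 : 0 < C t₀) (hL0 : 0 < L t₀) (hT0 : 0 < T t₀)
    (hunstable1 : ρC > α)
    (hunstable2 : (ρC - α) * τC * (C t₀ + L t₀ + T t₀) > 1) :
    ∀ t ∈ Set.Ici t₀, C t₀ ≤ C t :=
  carT_never_below_initial_general ρC ρL α τC hρL hα hτC t₀ C L T hC hL hT hC0 hL0 hT0 hunstable1
    hunstable2
end

section
/- Monotone growth of the total population (first part of Theorem 2): if C, L, T : [t₀, ∞) → ℝ are differentiable, satisfy the system C' = ρ_C(T+L+C)C − C/τ_C − αC², L' = ρ_L L − αLC, T' = −αTC, have C(t₀) > 0, L(t₀) > 0, T(t₀) > 0, and if ρ_C > α and (ρ_C − α)·τ_C·S(t₀) > 1 where S = C + L + T, then S is strictly monotone increasing on [t₀, ∞). -/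
/-!
Differentiating `S = C + L + T` along the system gives
`S' = C · ((ρ_C − α) S − 1/τ_C) + ρ_L L`.
`C` and `L` stay positive because their equations are linear in themselves, and then
`g = (ρ_C − α) S − 1/τ_C` satisfies `g' ≥ (ρ_C − α) C g`, so it stays positive as well,
starting from `g(t₀) > 0`. Hence `S' > 0` on `[t₀, ∞)`.
-/

open Set Real

/-- Barrier argument: `f` cannot cross the exponential `f a · e^{(m - 1)(t - a)}` from above,
since at a crossing point `f' ≥ m f > (m - 1) f`. -/
theorem pos_of_hasDerivAt_ge_const_mul {f d : ℝ → ℝ} {a b m : ℝ}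
    (hf : ∀ t ∈ Icc a b, HasDerivAt f (d t) t) (hd : ∀ t ∈ Ico a b, 0 < f t → m * f t ≤ d t)
    (ha : 0 < f a) : ∀ t ∈ Icc a b, 0 < f t := by
  set B : ℝ → ℝ := fun t => -(f a * exp ((m - 1) * (t - a)))
  have hB : ∀ t, HasDerivAt B (-(f a * (exp ((m - 1) * (t - a)) * (m - 1)))) t := fun t =>
    ((((hasDerivAt_id t).sub_const a).const_mul (m - 1)).exp.const_mul (f a)).neg.congr_deriv
      (by simp)
  have hbarrier : ∀ t ∈ Icc a b, -f t ≤ B t :=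
    image_le_of_deriv_right_lt_deriv_boundary
      (fun t ht => (hf t ht).continuousAt.neg.continuousWithinAt)
      (fun t ht => (hf t (Ico_subset_Icc_self ht)).neg.hasDerivWithinAt)
      (by simp [B]) hB
      (fun t ht hft => by
        rw [Pi.neg_apply, neg_inj] at hft
        have hpos : 0 < f t := hft ▸ mul_pos ha (exp_pos _)
        have hd' := hd t ht hpos
        have hB' : f a * (exp ((m - 1) * (t - a)) * (m - 1)) = (m - 1) * f t := by
          rw [hft]; ring
        linarith)
  intro t ht
  have hlow := hbarrier t ht
  simp only [B, neg_le_neg_iff] at hlow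
  exact (mul_pos ha (exp_pos _)).trans_le hlow

theorem pos_of_hasDerivAt_ge_mul {f a d : ℝ → ℝ} {t₀ : ℝ}
    (hf : ∀ t ∈ Ici t₀, HasDerivAt f (d t) t) (hd : ∀ t ∈ Ici t₀, 0 < f t → a t * f t ≤ d t)
    (ha : ContinuousOn a (Ici t₀)) (h0 : 0 < f t₀) : ∀ t ∈ Ici t₀, 0 < f t := by
  intro t₁ ht₁
  obtain ⟨m, hm⟩ := isCompact_Icc.bddBelow_image (ha.mono (Icc_subset_Ici_self : Icc t₀ t₁ ⊆ _))
  refine pos_of_hasDerivAt_ge_const_mul (m := m) (fun t ht => hf t ht.1)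
    (fun t ht hft => ?_) h0 t₁ ⟨ht₁, le_rfl⟩
  calc m * f t ≤ a t * f t :=
        mul_le_mul_of_nonneg_right (hm (mem_image_of_mem a (Ico_subset_Icc_self ht))) hft.le
    _ ≤ d t := hd t ht.1 hft

theorem hasDerivAt_total_population {ρC ρL α τC t : ℝ} {C L T : ℝ → ℝ}
    (hC : HasDerivAt C (ρC * (T t + L t + C t) * C t - C t / τC - α * (C t) ^ 2) t)
    (hL : HasDerivAt L (ρL * L t - α * L t * C t) t) (hT : HasDerivAt T (-(α * T t * C t)) t) :
    HasDerivAt (fun t => C t + L t + T t)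
      (C t * ((ρC - α) * (C t + L t + T t) - 1 / τC) + ρL * L t) t :=
  ((hC.add hL).add hT).congr_deriv (by ring)

theorem carT_total_population_strictMono_general
    (ρC ρL α τC : ℝ) (hρL : 0 < ρL) (hτC : 0 < τC)
    (t₀ : ℝ) (C L T S : ℝ → ℝ)
    (hS : S = fun t => C t + L t + T t)
    (hC : ∀ t ∈ Set.Ici t₀,
      HasDerivAt C (ρC * (T t + L t + C t) * C t - C t / τC - α * (C t) ^ 2) t)
    (hL : ∀ t ∈ Set.Ici t₀, HasDerivAt L (ρL * L t - α * L t * C t) t)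
    (hT : ∀ t ∈ Set.Ici t₀, HasDerivAt T (-(α * T t * C t)) t)
    (hC0 : 0 < C t₀) (hL0 : 0 < L t₀)
    (hunstable1 : ρC > α)
    (hunstable2 : (ρC - α) * τC * S t₀ > 1) :
    StrictMonoOn S (Set.Ici t₀) := by
  have hCc : ContinuousOn C (Ici t₀) := fun t ht => (hC t ht).continuousAt.continuousWithinAt
  have hLc : ContinuousOn L (Ici t₀) := fun t ht => (hL t ht).continuousAt.continuousWithinAt
  have hTc : ContinuousOn T (Ici t₀) := fun t ht => (hT t ht).continuousAt.continuousWithinAt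
  have hS' : ∀ t ∈ Ici t₀, HasDerivAt S (C t * ((ρC - α) * S t - 1 / τC) + ρL * L t) t := by
    subst hS
    exact fun t ht => hasDerivAt_total_population (hC t ht) (hL t ht) (hT t ht)
  have hCpos : ∀ t ∈ Ici t₀, 0 < C t :=
    pos_of_hasDerivAt_ge_mul hC (a := fun t => ρC * (T t + L t + C t) - 1 / τC - α * C t)
      (fun t _ _ => le_of_eq (by ring)) (by fun_prop (disch := assumption)) hC0
  have hLpos : ∀ t ∈ Ici t₀, 0 < L t :=
    pos_of_hasDerivAt_ge_mul hL (a := fun t => ρL - α * C t)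
      (fun t _ _ => le_of_eq (by ring)) (by fun_prop (disch := assumption)) hL0
  have hg0 : 0 < (ρC - α) * S t₀ - 1 / τC := by
    rw [sub_pos, div_lt_iff₀ hτC]
    linarith
  have hgpos : ∀ t ∈ Ici t₀, 0 < (ρC - α) * S t - 1 / τC :=
    pos_of_hasDerivAt_ge_mul (a := fun t => (ρC - α) * C t)
      (fun t ht => ((hS' t ht).const_mul (ρC - α)).sub_const (1 / τC))
      (fun t ht _ => by linarith [mul_pos (sub_pos.mpr hunstable1) (mul_pos hρL (hLpos t ht))])
      (by fun_prop (disch := assumption)) hg0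
  refine strictMonoOn_of_hasDerivWithinAt_pos (convex_Ici t₀)
    (fun t ht => (hS' t ht).continuousAt.continuousWithinAt)
    (fun t ht => (hS' t (interior_subset ht)).hasDerivWithinAt) (fun t ht => ?_)
  have ht : t ∈ Ici t₀ := interior_subset ht
  exact add_pos (mul_pos (hCpos t ht) (hgpos t ht)) (mul_pos hρL (hLpos t ht))

/-- Under the instability hypotheses `ρ_C > α` and
`(ρ_C − α)·τ_C·S(t₀) > 1`, the total population `S = C + L + T` is strictly
monotone increasing on `[t₀, ∞)`. -/
theorem carT_total_population_strictMono
    (ρC ρL α τC : ℝ) (hρC : 0 < ρC) (hρL : 0 < ρL) (hα : 0 < α) (hτC : 0 < τC)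
    (t₀ : ℝ) (C L T S : ℝ → ℝ)
    (hS : S = fun t => C t + L t + T t)
    (hC : ∀ t ∈ Set.Ici t₀,
      HasDerivAt C (ρC * (T t + L t + C t) * C t - C t / τC - α * (C t) ^ 2) t)
    (hL : ∀ t ∈ Set.Ici t₀, HasDerivAt L (ρL * L t - α * L t * C t) t)
    (hT : ∀ t ∈ Set.Ici t₀, HasDerivAt T (-(α * T t * C t)) t)
    (hC0 : 0 < C t₀) (hL0 : 0 < L t₀) (hT0 : 0 < T t₀)
    (hunstable1 : ρC > α)
    (hunstable2 : (ρC - α) * τC * S t₀ > 1) :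
    StrictMonoOn S (Set.Ici t₀) :=
  carT_total_population_strictMono_general ρC ρL α τC hρL hτC t₀ C L T S hS hC hL hT hC0 hL0
    hunstable1 hunstable2
end

section
/- Linear lower bound on the total population: if C, L, T : [t₀, ∞) → ℝ are differentiable, satisfy the system C' = ρ_C(T+L+C)C − C/τ_C − αC², L' = ρ_L L − αLC, T' = −αTC, have C(t₀) > 0, L(t₀) > 0, T(t₀) > 0, and if ρ_C > α and (ρ_C − α)·τ_C·S(t₀) > 1 where S = C + L + T, then setting Q₀ = ((ρ_C − α)·S(t₀) − 1/τ_C)·C(t₀) one has Q₀ > 0 and S(t) ≥ S(t₀) + Q₀·(t − t₀) for all t ≥ t₀. -/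
/-!
Write `φ = (ρ_C - α) S - 1/τ_C`. Summing the equations gives `S' = φ C + ρ_L L`, and the
`C`-equation reads `C' = (φ + α (L + T)) C`. Each of `T`, `L`, `C` solves a linear equation
`f' = g f` with continuous `g`, so stays positive; then `φ' = (ρ_C - α) S' ≥ (ρ_C - α) C φ` keeps
`φ` positive, hence nondecreasing, and so is `C`. Therefore `S' ≥ φ(t₀) C(t₀) = Q₀`.
-/

open Set

theorem add_mul_sub_le_of_le_hasDerivAt {f f' : ℝ → ℝ} {a q : ℝ}
    (hf : ∀ t ∈ Ici a, HasDerivAt f (f' t) t) (hq : ∀ t ∈ Ici a, q ≤ f' t) :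
    ∀ t ∈ Ici a, f a + q * (t - a) ≤ f t := by
  have hmono : MonotoneOn (fun t ↦ f t - q * t) (Ici a) :=
    monotoneOn_Ici_of_hasDerivAt_nonneg (f' := fun t ↦ f' t - q)
      (fun t ht ↦ ((hf t ht).sub ((hasDerivAt_id t).const_mul q)).congr_deriv (by rw [mul_one]))
      fun t ht ↦ sub_nonneg.2 (hq t ht)
  intro t ht
  linarith [hmono self_mem_Ici ht ht]

theorem pos_of_mul_le_hasDerivAt_s6 {f f' g : ℝ → ℝ} {t₀ : ℝ} (hg : ContinuousOn g (Ici t₀))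
    (hf : ∀ t ∈ Ici t₀, HasDerivAt f (f' t) t) (hgf : ∀ t ∈ Ici t₀, g t * f t ≤ f' t)
    (hf₀ : 0 < f t₀) : ∀ t ∈ Ici t₀, 0 < f t := by
  -- `f · exp (-G)` is nondecreasing for a primitive `G` of `g`, extended constantly left of `t₀`.
  set g₁ : ℝ → ℝ := fun t ↦ g (max t t₀)
  have hg₁ : Continuous g₁ :=
    hg.comp_continuous (continuous_id.max continuous_const) fun t ↦ le_max_right t t₀
  set G : ℝ → ℝ := fun t ↦ ∫ s in t₀..t, g₁ s
  have hG (t : ℝ) : HasDerivAt G (g₁ t) t :=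
    intervalIntegral.integral_hasDerivAt_right (hg₁.intervalIntegrable _ _)
      (hg₁.stronglyMeasurableAtFilter _ _) hg₁.continuousAt
  have hψ : ∀ t ∈ Ici t₀,
      HasDerivAt (fun t ↦ f t * Real.exp (-G t)) ((f' t - g t * f t) * Real.exp (-G t)) t := by
    intro t ht
    have hg₁t : g₁ t = g t := by simp only [g₁, max_eq_left (mem_Ici.1 ht)]
    refine ((hf t ht).mul (hG t).neg.exp).congr_deriv ?_
    simp only [hg₁t, Pi.neg_apply]
    ring
  have hmono := monotoneOn_Ici_of_hasDerivAt_nonneg hψ fun t ht ↦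
    mul_nonneg (sub_nonneg.2 (hgf t ht)) (Real.exp_pos _).le
  intro t ht
  have hψt : f t₀ ≤ f t * Real.exp (-G t) := by
    simpa [G] using hmono self_mem_Ici ht ht
  exact pos_of_mul_pos_left (hf₀.trans_le hψt) (Real.exp_pos _).le

structure IsCarTSolution (ρC ρL α τC t₀ : ℝ) (C L T : ℝ → ℝ) : Prop where
  hasDerivAt_C : ∀ t ∈ Ici t₀,
    HasDerivAt C (ρC * (T t + L t + C t) * C t - C t / τC - α * (C t) ^ 2) t
  hasDerivAt_L : ∀ t ∈ Ici t₀, HasDerivAt L (ρL * L t - α * L t * C t) t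
  hasDerivAt_T : ∀ t ∈ Ici t₀, HasDerivAt T (-(α * T t * C t)) t

namespace IsCarTSolution

variable {ρC ρL α τC t₀ : ℝ} {C L T : ℝ → ℝ}

theorem T_pos (h : IsCarTSolution ρC ρL α τC t₀ C L T) (hT₀ : 0 < T t₀) :
    ∀ t ∈ Ici t₀, 0 < T t :=
  pos_of_mul_le_hasDerivAt_s6 (g := fun t ↦ -(α * C t))
    (continuousOn_const.mul (HasDerivAt.continuousOn h.hasDerivAt_C)).neg h.hasDerivAt_T
    (fun t _ ↦ le_of_eq (by ring)) hT₀

theorem L_pos (h : IsCarTSolution ρC ρL α τC t₀ C L T) (hL₀ : 0 < L t₀) :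
    ∀ t ∈ Ici t₀, 0 < L t :=
  pos_of_mul_le_hasDerivAt_s6 (g := fun t ↦ ρL - α * C t)
    (continuousOn_const.sub (continuousOn_const.mul (HasDerivAt.continuousOn h.hasDerivAt_C)))
    h.hasDerivAt_L (fun t _ ↦ le_of_eq (by ring)) hL₀

theorem C_pos (h : IsCarTSolution ρC ρL α τC t₀ C L T) (hC₀ : 0 < C t₀) :
    ∀ t ∈ Ici t₀, 0 < C t := by
  have hC := HasDerivAt.continuousOn h.hasDerivAt_C
  have hL := HasDerivAt.continuousOn h.hasDerivAt_L
  have hT := HasDerivAt.continuousOn h.hasDerivAt_T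
  exact pos_of_mul_le_hasDerivAt_s6 (g := fun t ↦ ρC * (T t + L t + C t) - 1 / τC - α * C t)
    (((continuousOn_const.mul ((hT.add hL).add hC)).sub continuousOn_const).sub
      (continuousOn_const.mul hC))
    h.hasDerivAt_C (fun t _ ↦ le_of_eq (by ring)) hC₀

theorem hasDerivAt_total (h : IsCarTSolution ρC ρL α τC t₀ C L T) :
    ∀ t ∈ Ici t₀, HasDerivAt (fun t ↦ C t + L t + T t)
      (((ρC - α) * (C t + L t + T t) - 1 / τC) * C t + ρL * L t) t := fun t ht ↦
  (((h.hasDerivAt_C t ht).add (h.hasDerivAt_L t ht)).add (h.hasDerivAt_T t ht)).congr_deriv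
    (by ring)

theorem margin_monotoneOn (h : IsCarTSolution ρC ρL α τC t₀ C L T) (hαρ : α < ρC)
    (hρL : 0 ≤ ρL) (hC₀ : 0 < C t₀) (hL₀ : 0 < L t₀)
    (hφ₀ : 0 < (ρC - α) * (C t₀ + L t₀ + T t₀) - 1 / τC) :
    MonotoneOn (fun t ↦ (ρC - α) * (C t + L t + T t) - 1 / τC) (Ici t₀) := by
  set φ : ℝ → ℝ := fun t ↦ (ρC - α) * (C t + L t + T t) - 1 / τC
  have hφ' : ∀ t ∈ Ici t₀, HasDerivAt φ ((ρC - α) * (φ t * C t + ρL * L t)) t :=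
    fun t ht ↦ ((h.hasDerivAt_total t ht).const_mul _).sub_const _
  have hC := h.C_pos hC₀
  have hρL_L (t : ℝ) (ht : t ∈ Ici t₀) : 0 ≤ (ρC - α) * (ρL * L t) :=
    mul_nonneg (sub_nonneg.2 hαρ.le) (mul_nonneg hρL (h.L_pos hL₀ t ht).le)
  have hφ_pos : ∀ t ∈ Ici t₀, 0 < φ t :=
    pos_of_mul_le_hasDerivAt_s6 (g := fun t ↦ (ρC - α) * C t)
      (continuousOn_const.mul (HasDerivAt.continuousOn h.hasDerivAt_C)) hφ'
      (fun t ht ↦ by linarith [hρL_L t ht]) hφ₀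
  refine monotoneOn_Ici_of_hasDerivAt_nonneg hφ' fun t ht ↦ ?_
  have := mul_nonneg (sub_nonneg.2 hαρ.le) (mul_nonneg (hφ_pos t ht).le (hC t ht).le)
  linarith [hρL_L t ht]

theorem C_monotoneOn (h : IsCarTSolution ρC ρL α τC t₀ C L T) (hα : 0 ≤ α)
    (hC₀ : 0 < C t₀) (hL₀ : 0 < L t₀) (hT₀ : 0 < T t₀)
    (hφ : ∀ t ∈ Ici t₀, 0 ≤ (ρC - α) * (C t + L t + T t) - 1 / τC) :
    MonotoneOn C (Ici t₀) := by
  refine monotoneOn_Ici_of_hasDerivAt_nonneg h.hasDerivAt_C fun t ht ↦ ?_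
  have hLT : 0 ≤ α * (L t + T t) :=
    mul_nonneg hα (add_nonneg (h.L_pos hL₀ t ht).le (h.T_pos hT₀ t ht).le)
  calc (0 : ℝ)
      ≤ ((ρC - α) * (C t + L t + T t) - 1 / τC + α * (L t + T t)) * C t :=
        mul_nonneg (add_nonneg (hφ t ht) hLT) (h.C_pos hC₀ t ht).le
    _ = ρC * (T t + L t + C t) * C t - C t / τC - α * C t ^ 2 := by ring

end IsCarTSolution

theorem carT_total_population_linear_lower_bound_general
    (ρC ρL α τC : ℝ) (hρL : 0 < ρL) (hα : 0 < α) (hτC : 0 < τC)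
    (t₀ : ℝ) (C L T S : ℝ → ℝ)
    (hS : S = fun t => C t + L t + T t)
    (hC : ∀ t ∈ Set.Ici t₀,
      HasDerivAt C (ρC * (T t + L t + C t) * C t - C t / τC - α * (C t) ^ 2) t)
    (hL : ∀ t ∈ Set.Ici t₀, HasDerivAt L (ρL * L t - α * L t * C t) t)
    (hT : ∀ t ∈ Set.Ici t₀, HasDerivAt T (-(α * T t * C t)) t)
    (hC0 : 0 < C t₀) (hL0 : 0 < L t₀) (hT0 : 0 < T t₀)
    (hunstable1 : ρC > α)
    (hunstable2 : (ρC - α) * τC * S t₀ > 1)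
    (Q₀ : ℝ) (hQ₀ : Q₀ = ((ρC - α) * S t₀ - 1 / τC) * C t₀) :
    0 < Q₀ ∧ ∀ t ∈ Set.Ici t₀, S t₀ + Q₀ * (t - t₀) ≤ S t := by
  subst hS hQ₀
  have h : IsCarTSolution ρC ρL α τC t₀ C L T := ⟨hC, hL, hT⟩
  have hφ₀ : 0 < (ρC - α) * (C t₀ + L t₀ + T t₀) - 1 / τC := by
    rw [sub_pos, div_lt_iff₀ hτC]
    linarith
  have hφ := h.margin_monotoneOn hunstable1 hρL.le hC0 hL0 hφ₀
  have hCmono := h.C_monotoneOn hα.le hC0 hL0 hT0 fun t ht ↦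
    hφ₀.le.trans (hφ self_mem_Ici ht ht)
  refine ⟨mul_pos hφ₀ hC0, add_mul_sub_le_of_le_hasDerivAt h.hasDerivAt_total fun t ht ↦ ?_⟩
  have hφt := hφ self_mem_Ici ht ht
  have hQ₀_le := mul_le_mul hφt (hCmono self_mem_Ici ht ht) hC0.le (hφ₀.le.trans hφt)
  linarith [mul_nonneg hρL.le (h.L_pos hL0 t ht).le]

/-- Linear lower bound for the total population: under the
instability hypotheses, with `Q₀ = ((ρ_C − α)·S(t₀) − 1/τ_C)·C(t₀)` one has
`Q₀ > 0` and `S(t) ≥ S(t₀) + Q₀·(t − t₀)` for all `t ≥ t₀`. -/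
theorem carT_total_population_linear_lower_bound
    (ρC ρL α τC : ℝ) (hρC : 0 < ρC) (hρL : 0 < ρL) (hα : 0 < α) (hτC : 0 < τC)
    (t₀ : ℝ) (C L T S : ℝ → ℝ)
    (hS : S = fun t => C t + L t + T t)
    (hC : ∀ t ∈ Set.Ici t₀,
      HasDerivAt C (ρC * (T t + L t + C t) * C t - C t / τC - α * (C t) ^ 2) t)
    (hL : ∀ t ∈ Set.Ici t₀, HasDerivAt L (ρL * L t - α * L t * C t) t)
    (hT : ∀ t ∈ Set.Ici t₀, HasDerivAt T (-(α * T t * C t)) t)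
    (hC0 : 0 < C t₀) (hL0 : 0 < L t₀) (hT0 : 0 < T t₀)
    (hunstable1 : ρC > α)
    (hunstable2 : (ρC - α) * τC * S t₀ > 1)
    (Q₀ : ℝ) (hQ₀ : Q₀ = ((ρC - α) * S t₀ - 1 / τC) * C t₀) :
    0 < Q₀ ∧ ∀ t ∈ Set.Ici t₀, S t₀ + Q₀ * (t - t₀) ≤ S t :=
  carT_total_population_linear_lower_bound_general ρC ρL α τC hρL hα hτC t₀ C L T S hS hC hL hT hC0
    hL0 hT0 hunstable1 hunstable2 Q₀ hQ₀
end

section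
/- Classification of equilibria: assume ρ_C, ρ_L, α, τ_C > 0 and ρ_C ≠ α. A point (C,L,T) ∈ ℝ³ satisfies the equilibrium equations ρ_C(T+L+C)C − C/τ_C − αC² = 0, ρ_L L − αLC = 0, −αTC = 0 if and only if it has one of the following three forms: (i) E₁ = (0, 0, T*) for some T* ∈ ℝ; (ii) E₂ = (ρ_L/α, 1/(ρ_C τ_C) + ρ_L/ρ_C − ρ_L/α, 0); (iii) E₃ = (1/(τ_C(ρ_C − α)), 0, 0). -/
/-! If `C = 0` the system collapses to `ρ_L L = 0`. Otherwise `T = 0`, and after dividing the first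
equation by `C` an equilibrium is an intersection of the nullclines `L (ρ_L − α C) = 0` and
`ρ_C (L + C) − 1/τ_C − α C = 0`; the two branches `C = ρ_L/α` and `L = 0` of the first one give
`E₂` and `E₃`. -/

def IsCarTEquilibrium {K : Type*} [Field K] (ρC ρL α τC C L T : K) : Prop :=
  ρC * (T + L + C) * C - C / τC - α * C ^ 2 = 0 ∧ ρL * L - α * L * C = 0 ∧ -(α * T * C) = 0

section

variable {K : Type*} [Field K] {ρC ρL α τC C L T : K}

theorem isCarTEquilibrium_iff_of_C_eq_zero (hρL : ρL ≠ 0) (hC : C = 0) :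
    IsCarTEquilibrium ρC ρL α τC C L T ↔ L = 0 := by
  simp [IsCarTEquilibrium, hC, hρL]

theorem isCarTEquilibrium_iff_of_C_ne_zero (hα : α ≠ 0) (hC : C ≠ 0) :
    IsCarTEquilibrium ρC ρL α τC C L T ↔
      T = 0 ∧ L * (ρL - α * C) = 0 ∧ ρC * (L + C) - τC⁻¹ - α * C = 0 := by
  unfold IsCarTEquilibrium
  constructor
  · rintro ⟨h₁, h₂, h₃⟩
    obtain rfl : T = 0 := by simpa [hα, hC] using h₃
    refine ⟨rfl, by linear_combination h₂, ?_⟩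
    have : C * (ρC * (L + C) - τC⁻¹ - α * C) = 0 := by linear_combination h₁
    exact (mul_eq_zero.mp this).resolve_left hC
  · rintro ⟨rfl, h₂, h₁⟩
    exact ⟨by linear_combination C * h₁, by linear_combination h₂, by ring⟩

theorem carT_nullclines_inter_iff (hρC : ρC ≠ 0) (hα : α ≠ 0) (hne : ρC ≠ α) :
    (L * (ρL - α * C) = 0 ∧ ρC * (L + C) - τC⁻¹ - α * C = 0) ↔
      (C = ρL / α ∧ L = 1 / (ρC * τC) + ρL / ρC - ρL / α) ∨
      (C = 1 / (τC * (ρC - α)) ∧ L = 0) := by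
  have hsub : ρC - α ≠ 0 := sub_ne_zero.mpr hne
  constructor
  · rintro ⟨h₂, h₁⟩
    rcases mul_eq_zero.mp h₂ with rfl | h
    · right
      refine ⟨?_, rfl⟩
      rw [one_div, mul_inv, eq_mul_inv_iff_mul_eq₀ hsub]
      linear_combination h₁
    · left
      have hC : C = ρL / α := by
        rw [eq_div_iff hα]; linear_combination -h
      refine ⟨hC, ?_⟩
      rw [← hC, eq_sub_iff_add_eq, one_div, mul_inv, inv_mul_eq_div, ← add_div, eq_div_iff hρC]
      linear_combination h₁ - h
  · rintro (⟨rfl, rfl⟩ | ⟨rfl, rfl⟩)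
    · constructor
      · field_simp; ring
      · rw [one_div, mul_inv]; field_simp; ring
    · constructor
      · ring
      · rw [one_div, mul_inv]; field_simp; ring

end

theorem carT_model_equilibria_classification_general
    (ρC ρL α τC : ℝ) (hρC : 0 < ρC) (hρL : 0 < ρL) (hα : 0 < α)
    (hne : ρC ≠ α) (C L T : ℝ) :
    (ρC * (T + L + C) * C - C / τC - α * C ^ 2 = 0 ∧
     ρL * L - α * L * C = 0 ∧
     -(α * T * C) = 0) ↔
    ((∃ Tstar : ℝ, (C, L, T) = (0, 0, Tstar)) ∨
     (C, L, T) = (ρL / α, 1 / (ρC * τC) + ρL / ρC - ρL / α, 0) ∨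
     (C, L, T) = (1 / (τC * (ρC - α)), 0, 0)) := by
  change IsCarTEquilibrium ρC ρL α τC C L T ↔ _
  simp only [Prod.mk.injEq]
  by_cases hC : C = 0
  · rw [isCarTEquilibrium_iff_of_C_eq_zero hρL.ne' hC]
    have hE₂ : C ≠ ρL / α := hC ▸ (div_pos hρL hα).ne
    constructor
    · exact fun hL => Or.inl ⟨T, hC, hL, rfl⟩
    · rintro (⟨_, _, hL, _⟩ | ⟨hC₂, _⟩ | ⟨_, hL, _⟩)
      exacts [hL, absurd hC₂ hE₂, hL]
  · rw [isCarTEquilibrium_iff_of_C_ne_zero hα.ne' hC,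
      carT_nullclines_inter_iff hρC.ne' hα.ne' hne]
    simp only [hC, false_and, exists_false, false_or]
    tauto

/-- Classification of the equilibria of the CAR-T/leukemia/normal
T-cell model (with `g = 0`): a point `(C, L, T)` solves the equilibrium equations
iff it is of the form `E₁ = (0, 0, T*)`, `E₂ = (ρ_L/α, 1/(ρ_C τ_C) + ρ_L/ρ_C − ρ_L/α, 0)`
or `E₃ = (1/(τ_C(ρ_C − α)), 0, 0)`. -/
theorem carT_model_equilibria_classification
    (ρC ρL α τC : ℝ) (hρC : 0 < ρC) (hρL : 0 < ρL) (hα : 0 < α) (hτC : 0 < τC)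
    (hne : ρC ≠ α) (C L T : ℝ) :
    (ρC * (T + L + C) * C - C / τC - α * C ^ 2 = 0 ∧
     ρL * L - α * L * C = 0 ∧
     -(α * T * C) = 0) ↔
    ((∃ Tstar : ℝ, (C, L, T) = (0, 0, Tstar)) ∨
     (C, L, T) = (ρL / α, 1 / (ρC * τC) + ρL / ρC - ρL / α, 0) ∨
     (C, L, T) = (1 / (τC * (ρC - α)), 0, 0)) :=
  carT_model_equilibria_classification_general ρC ρL α τC hρC hρL hα hne C L T
end

section
/- Roots of the E₂ characteristic quadratic: if ρ_L > 0, τ_C > 0, α > 0 and 0 < ρ_C < α, then every complex root λ of the quadratic λ² + (1 − ρ_C/α)ρ_L·λ + ρ_L²(1 − ρ_C/α) + ρ_L/τ_C = 0 is non-real and has real part equal to (ρ_L/2)(ρ_C/α − 1), which is strictly negative. -/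
/-- Roots of the characteristic quadratic at `E₂`: if
`ρ_L, τ_C, α > 0` and `0 < ρ_C < α`, then every complex root `λ` of
`λ² + (1 − ρ_C/α)ρ_L·λ + ρ_L²(1 − ρ_C/α) + ρ_L/τ_C = 0` is non-real and has
real part `(ρ_L/2)(ρ_C/α − 1) < 0`. -/
theorem carT_E2_quadratic_roots
    (ρC ρL α τC : ℝ) (hρL : 0 < ρL) (hτC : 0 < τC) (hα : 0 < α)
    (hρC : 0 < ρC) (hρCα : ρC < α) :
    ∀ lam : ℂ,
      lam ^ 2 + (((1 - ρC / α) * ρL : ℝ) : ℂ) * lam +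
        ((ρL ^ 2 * (1 - ρC / α) + ρL / τC : ℝ) : ℂ) = 0 →
      lam.im ≠ 0 ∧ lam.re = ρL / 2 * (ρC / α - 1) ∧ lam.re < 0 := by
  intro lam h
  have hs : 0 < 1 - ρC / α := by
    have : ρC / α < 1 := (div_lt_one hα).mpr hρCα
    linarith
  have hs1 : ρC / α > 0 := div_pos hρC hα
  set x := lam.re with hx
  set y := lam.im with hy
  have h1 := congrArg Complex.re h
  have h2 := congrArg Complex.im h
  simp [pow_two, Complex.add_re, Complex.add_im, Complex.mul_re, Complex.mul_im] at h1 h2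
  rw [← hx, ← hy] at h1 h2
  -- h1 : x*x - y*y + (1-ρC/α)*ρL*x + (ρL^2*(1-ρC/α)+ρL/τC) = 0
  -- h2 : (x*y + y*x) + (1-ρC/α)*ρL*y = 0
  have hy0 : y ≠ 0 := by
    intro hy0
    rw [hy0] at h1
    have hpos : 0 < ρL / τC := div_pos hρL hτC
    nlinarith [sq_nonneg (x + (1 - ρC / α) * ρL / 2), sq_nonneg ((1 - ρC / α) * ρL),
      mul_pos (mul_pos hρL hρL) hs, sq_nonneg (1 - ρC / α)]
  have hx0 : x = ρL / 2 * (ρC / α - 1) := by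
    have : y * (2 * x + (1 - ρC / α) * ρL) = 0 := by linarith [h2]
    have h3 : 2 * x + (1 - ρC / α) * ρL = 0 := by
      rcases mul_eq_zero.mp this with h | h
      · exact absurd h hy0
      · exact h
    linarith
  refine ⟨hy0, hx0, ?_⟩
  rw [hx0]
  have : ρC / α - 1 < 0 := by linarith
  nlinarith
end

section
/- Local linear stability of E₂: if ρ_L > 0, τ_C > 0, α > 0 and 0 < ρ_C < α, then every complex eigenvalue of the matrix J(E₂) = [[ρ_L(ρ_C/α − 1), ρ_C ρ_L/α, ρ_C ρ_L/α], [−α(ρ_L + 1/τ_C)/ρ_C + ρ_L, 0, 0], [0, 0, −ρ_L]] has strictly negative real part. -/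
/-- Local linear stability of `E₂`: if `ρ_L, τ_C, α > 0` and
`0 < ρ_C < α`, then every complex eigenvalue of the Jacobian
`J(E₂) = [[ρ_L(ρ_C/α − 1), ρ_C ρ_L/α, ρ_C ρ_L/α], [−α(ρ_L + 1/τ_C)/ρ_C + ρ_L, 0, 0], [0, 0, −ρ_L]]`
has strictly negative real part. -/
theorem carT_E2_linearly_stable
    (ρC ρL α τC : ℝ) (hρL : 0 < ρL) (hτC : 0 < τC) (hα : 0 < α)
    (hρC : 0 < ρC) (hρCα : ρC < α)
    (J : Matrix (Fin 3) (Fin 3) ℂ)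
    (hJ : J = !![((ρL * (ρC / α - 1) : ℝ) : ℂ), ((ρC * ρL / α : ℝ) : ℂ), ((ρC * ρL / α : ℝ) : ℂ);
                 ((-(α * (ρL + 1 / τC) / ρC) + ρL : ℝ) : ℂ), 0, 0;
                 0, 0, ((-ρL : ℝ) : ℂ)]) :
    ∀ μ ∈ spectrum ℂ J, μ.re < 0 := by
  intro μ hμ
  rw [spectrum.mem_iff, Matrix.isUnit_iff_isUnit_det, isUnit_iff_ne_zero, not_ne_iff] at hμ
  rw [hJ] at hμ
  rw [Matrix.det_fin_three] at hμ
  simp [Matrix.algebraMap_matrix_apply, Matrix.sub_apply, Matrix.one_apply,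
    Matrix.vecHead, Matrix.vecTail] at hμ
  -- A : trace of the 2×2 block, Q : its determinant
  set A : ℝ := ρL * (ρC / α - 1) with hAdef
  set Q : ℝ := ρC * ρL / α * (α * (ρL + 1 / τC) / ρC - ρL) with hQdef
  have hA : A < 0 := by
    have h1 : ρC / α < 1 := (div_lt_one hα).mpr hρCα
    have : ρC / α - 1 < 0 := by linarith
    exact mul_neg_of_pos_of_neg hρL this
  have hQ : 0 < Q := by
    have h1 : (0:ℝ) < ρC * ρL / α := by positivity
    have h2 : (0:ℝ) < α * (ρL + 1 / τC) / ρC - ρL := by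
      rw [sub_pos, lt_div_iff₀ hρC]
      have h3 : (0:ℝ) < 1 / τC := by positivity
      nlinarith
    exact mul_pos h1 h2
  have hfac : (μ + (ρL : ℂ)) * (μ * μ - (A : ℂ) * μ + (Q : ℂ)) = 0 := by
    have hAc : (A : ℂ) = (ρL : ℂ) * ((ρC : ℂ) / (α : ℂ) - 1) := by push_cast [hAdef]; ring
    have hQc : (Q : ℂ) = (ρC : ℂ) * (ρL : ℂ) / (α : ℂ) *
        ((α : ℂ) * ((ρL : ℂ) + ((τC : ℂ))⁻¹) / (ρC : ℂ) - (ρL : ℂ)) := by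
      push_cast [hQdef]; ring
    rw [hAc, hQc]
    linear_combination hμ
  rcases mul_eq_zero.mp hfac with h | h
  · have : μ = -(ρL : ℂ) := by linear_combination h
    rw [this]
    simpa using hρL
  · -- quadratic case: take real and imaginary parts
    rw [Complex.ext_iff] at h
    obtain ⟨h1, h2⟩ := h
    simp [Complex.mul_re, Complex.mul_im, Complex.ofReal_re, Complex.ofReal_im] at h1 h2
    set x := μ.re
    set y := μ.im
    have h1' : x * x - y * y - A * x + Q = 0 := by linarith
    have h2' : y * (2 * x - A) = 0 := by linarith
    rcases mul_eq_zero.mp h2' with hy | hx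
    · by_contra hc
      push_neg at hc
      nlinarith [mul_nonneg hc hc, mul_nonneg (neg_pos.mpr hA).le hc]
    · linarith
end
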